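/- Let Δ be a short ordered abelian group and Γ a divisible ordered abelian group that is η₁ as a linearly ordered set. Then any ordered group embedding of an ordered subgroup Δ₀ of Δ into Γ extends to an ordered group embedding of Δ into Γ. -/

import Mathlib

/-!
A subgroup of `Δ × Γ` on which the two coordinates always have the same sign is the graph of a
strictly monotone homomorphism from a subgroup of `Δ` to `Γ`. By Zorn's lemma it suffices to extend
such a graph `G` by a pair `(δ, γ)` for every `δ`, and for this `γ` has to realize the cut of `δ`
over `G`: `n • δ` and `n • γ` must lie on the same side of `a` and `α` for all `(a, α) ∈ G`, `n > 0`.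
If some `n • δ` with `n > 0` has a value `β`, then `γ = β / n` does it. Otherwise `γ` must lie
strictly between the `α / n` with `a < n • δ` and those with `n • δ < a`; shortness of `Δ` makes the
former countably cofinal and the latter countably coinitial, so `η₁` provides `γ`.
-/

/-- A linear order is short if every subset has countable cofinality and countable
coinitiality. -/
def IsShortCof (S : Type*) [LinearOrder S] : Prop :=
  ∀ A : Set S, Order.cof A ≤ Cardinal.aleph0 ∧
    Order.cof Aᵒᵈ ≤ Cardinal.aleph0

/-- A linear order `T` is `η₁` if for all countable subsets `A < B` there is `t` with
`A < t < B`. -/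
def IsEtaOne (T : Type*) [LinearOrder T] : Prop :=
  ∀ A B : Set T, A.Countable → B.Countable → (∀ a ∈ A, ∀ b ∈ B, a < b) →
    ∃ t : T, (∀ a ∈ A, a < t) ∧ ∀ b ∈ B, t < b

open SignType

section CountablyCofinal

variable {α β ι : Type*}

def IsCountablyCofinal [Preorder α] (s : Set α) : Prop :=
  ∃ t ⊆ s, t.Countable ∧ IsCofinalFor s t

theorem IsCountablyCofinal.iUnion [Preorder α] [Countable ι] {s : ι → Set α}
    (hs : ∀ i, IsCountablyCofinal (s i)) : IsCountablyCofinal (⋃ i, s i) := by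
  choose t hts htc hcof using hs
  refine ⟨⋃ i, t i, Set.iUnion_mono hts, Set.countable_iUnion htc, fun a ha => ?_⟩
  obtain ⟨i, hi⟩ := Set.mem_iUnion.1 ha
  obtain ⟨b, hb, hab⟩ := hcof i hi
  exact ⟨b, Set.mem_iUnion_of_mem i hb, hab⟩

theorem IsCountablyCofinal.image [Preorder α] [Preorder β] {s : Set ι} {u : ι → α} {v : ι → β}
    (hs : IsCountablyCofinal (u '' s)) (huv : ∀ x ∈ s, ∀ y ∈ s, u x ≤ u y → v x ≤ v y) :
    IsCountablyCofinal (v '' s) := by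
  obtain ⟨t, hts, htc, hcof⟩ := hs
  choose w hws hw using fun b : t => hts b.2
  have := htc.to_subtype
  refine ⟨Set.range (v ∘ w), ?_, Set.countable_range _, ?_⟩
  · rintro _ ⟨b, rfl⟩
    exact ⟨w b, hws b, rfl⟩
  · rintro _ ⟨x, hx, rfl⟩
    obtain ⟨b, hb, hxb⟩ := hcof ⟨x, hx, rfl⟩
    exact ⟨v (w ⟨b, hb⟩), ⟨⟨b, hb⟩, rfl⟩, huv x hx _ (hws _) (by rwa [hw])⟩

theorem isCountablyCofinal_of_cof_le [Preorder α] {s : Set α}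
    (h : Order.cof s ≤ Cardinal.aleph0) : IsCountablyCofinal s := by
  obtain ⟨t, ht, hcard⟩ := Order.exists_cof_eq s
  refine ⟨Subtype.val '' t, Subtype.coe_image_subset s t, ?_, fun a ha => ?_⟩
  · exact (Set.countable_coe_iff.1 (Cardinal.mk_le_aleph0_iff.1 (hcard ▸ h))).image _
  · obtain ⟨b, hb, hab⟩ := ht ⟨a, ha⟩
    exact ⟨b, ⟨b, hb, rfl⟩, hab⟩

theorem IsShortCof.isCountablyCofinal [LinearOrder α] (h : IsShortCof α) (s : Set α) :
    IsCountablyCofinal s :=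
  isCountablyCofinal_of_cof_le (h s).1

theorem IsShortCof.isCountablyCofinal_dual [LinearOrder α] (h : IsShortCof α) (s : Set α) :
    IsCountablyCofinal (α := αᵒᵈ) s :=
  isCountablyCofinal_of_cof_le (h s).2

theorem IsEtaOne.exists_between [LinearOrder α] (h : IsEtaOne α) {s t : Set α}
    (hs : IsCountablyCofinal s) (ht : IsCountablyCofinal (α := αᵒᵈ) t)
    (hst : ∀ a ∈ s, ∀ b ∈ t, a < b) : ∃ x, (∀ a ∈ s, a < x) ∧ ∀ b ∈ t, x < b := by
  obtain ⟨s₀, hs₀, hs₀c, hscof⟩ := hs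
  obtain ⟨t₀, ht₀, ht₀c, htcof⟩ := ht
  obtain ⟨x, hs₀x, hxt₀⟩ := h s₀ t₀ hs₀c ht₀c fun a ha b hb => hst a (hs₀ ha) b (ht₀ hb)
  refine ⟨x, fun a ha => ?_, fun b hb => ?_⟩
  · obtain ⟨a', ha', haa'⟩ := hscof ha
    exact haa'.trans_lt (hs₀x a' ha')
  · obtain ⟨b', hb', hb'b⟩ := htcof hb
    exact (hxt₀ b' hb').trans_le hb'b

end CountablyCofinal

noncomputable abbrev divisibleByNatOfExists {α : Type*} [AddMonoid α]
    (h : ∀ n : ℕ, 0 < n → ∀ a : α, ∃ b, n • b = a) : DivisibleBy α ℕ where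
  div a n := if hn : 0 < n then (h n hn a).choose else 0
  div_zero _ := dif_neg (lt_irrefl 0)
  div_cancel a hn := by
    rw [dif_pos (Nat.pos_of_ne_zero hn)]
    exact (h _ (Nat.pos_of_ne_zero hn) a).choose_spec

section OrderedGroup

variable {α : Type*} [AddCommGroup α] [LinearOrder α] [IsOrderedAddMonoid α]

theorem sign_nsmul {n : ℕ} (hn : n ≠ 0) (a : α) : sign (n • a) = sign a := by
  rcases lt_trichotomy a 0 with h | rfl | h
  · rw [sign_neg h, sign_neg (nsmul_neg h hn)]
  · rw [smul_zero]
  · rw [sign_pos h, sign_pos (nsmul_pos h hn)]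

theorem DivisibleBy.div_mono [DivisibleBy α ℕ] (n : ℕ) :
    Monotone (DivisibleBy.div · n : α → α) := by
  intro a b hab
  rcases eq_or_ne n 0 with rfl | hn
  · simp only [DivisibleBy.div_zero, le_refl]
  · rwa [← nsmul_le_nsmul_iff_right hn, DivisibleBy.div_cancel _ hn, DivisibleBy.div_cancel _ hn]

end OrderedGroup

section StrictMonoGraph

variable {Δ Γ : Type*} [AddCommGroup Δ] [LinearOrder Δ] [AddCommGroup Γ] [LinearOrder Γ]
  {G : AddSubgroup (Δ × Γ)} {p q : Δ × Γ} {δ : Δ} {γ : Γ}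

/-- For a subgroup of `Δ × Γ`, preserving signs says exactly that it is the graph of a strictly
monotone homomorphism from a subgroup of `Δ` to `Γ`. -/
def IsStrictMonoGraph (G : AddSubgroup (Δ × Γ)) : Prop :=
  ∀ p ∈ G, sign p.1 = sign p.2

def RealizesCut (G : AddSubgroup (Δ × Γ)) (δ : Δ) (γ : Γ) : Prop :=
  ∀ p ∈ G, ∀ n : ℕ, n ≠ 0 → sign (n • δ - p.1) = sign (n • γ - p.2)

theorem isStrictMonoGraph_sSup {c : Set (AddSubgroup (Δ × Γ))} (hne : c.Nonempty)
    (hc : DirectedOn (· ≤ ·) c) (h : ∀ G ∈ c, IsStrictMonoGraph G) :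
    IsStrictMonoGraph (sSup c) := by
  intro p hp
  obtain ⟨G, hG, hpG⟩ := (AddSubgroup.mem_sSup_of_directedOn hne hc).1 hp
  exact h G hG p hpG

theorem isStrictMonoGraph_range_prod {Δ₀ : AddSubgroup Δ} {f : Δ₀ →+ Γ} (hf : StrictMono f) :
    IsStrictMonoGraph (Δ₀.subtype.prod f).range := by
  rintro _ ⟨x, rfl⟩
  change sign (x : Δ) = sign (f x)
  rcases lt_trichotomy x 0 with h | rfl | h
  · rw [sign_neg (show (x : Δ) < 0 from h), sign_neg (show f x < 0 by simpa using hf h)]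
  · simp
  · rw [sign_pos (show 0 < (x : Δ) from h), sign_pos (show 0 < f x by simpa using hf h)]

theorem IsStrictMonoGraph.snd_eq_snd (hG : IsStrictMonoGraph G) (hp : p ∈ G) (hq : q ∈ G)
    (h : p.1 = q.1) : p.2 = q.2 := by
  have := hG (q - p) (sub_mem hq hp)
  rwa [Prod.fst_sub, Prod.snd_sub, h, sub_self, sign_zero, eq_comm, sign_eq_zero_iff, sub_eq_zero,
    eq_comm] at this

variable [IsOrderedAddMonoid Δ] [IsOrderedAddMonoid Γ]

theorem IsStrictMonoGraph.snd_lt_snd (hG : IsStrictMonoGraph G) (hp : p ∈ G) (hq : q ∈ G)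
    (h : p.1 < q.1) : p.2 < q.2 := by
  have := hG (q - p) (sub_mem hq hp)
  rwa [Prod.fst_sub, Prod.snd_sub, sign_pos (sub_pos.2 h), eq_comm, sign_eq_one_iff,
    sub_pos] at this

theorem IsStrictMonoGraph.snd_le_snd (hG : IsStrictMonoGraph G) (hp : p ∈ G) (hq : q ∈ G)
    (h : p.1 ≤ q.1) : p.2 ≤ q.2 :=
  h.lt_or_eq.elim (fun h => (hG.snd_lt_snd hp hq h).le) fun h => (hG.snd_eq_snd hp hq h).le

theorem IsStrictMonoGraph.exists_addMonoidHom (hG : IsStrictMonoGraph G)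
    (htot : ∀ a, ∃ b, (a, b) ∈ G) : ∃ g : Δ →+ Γ, StrictMono g ∧ ∀ p ∈ G, g p.1 = p.2 := by
  choose g hg using htot
  have hgG : ∀ p ∈ G, g p.1 = p.2 := fun p hp => hG.snd_eq_snd (hg p.1) hp rfl
  exact ⟨AddMonoidHom.mk' g fun a b => hgG _ (add_mem (hg a) (hg b)),
    fun a b hab => hG.snd_lt_snd (hg a) (hg b) hab, hgG⟩

theorem IsStrictMonoGraph.sup_zmultiples (hG : IsStrictMonoGraph G) (h : RealizesCut G δ γ) :
    IsStrictMonoGraph (G ⊔ AddSubgroup.zmultiples (δ, γ)) := by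
  intro x hx
  obtain ⟨p, hp, _, ⟨m, rfl⟩, rfl⟩ := AddSubgroup.mem_sup.1 hx
  obtain ⟨n, rfl | rfl⟩ := Int.eq_nat_or_neg m <;> rcases eq_or_ne n 0 with rfl | hn
  · simpa using hG p hp
  · simpa [sub_neg_eq_add, add_comm] using h (-p) (neg_mem hp) n hn
  · simpa using hG p hp
  · simp only [neg_zsmul, natCast_zsmul, ← sub_eq_add_neg, Prod.fst_sub, Prod.snd_sub,
      Prod.smul_fst, Prod.smul_snd]
    rw [← neg_sub, Left.sign_neg, h p hp n hn, ← Left.sign_neg, neg_sub]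

theorem realizesCut_div [DivisibleBy Γ ℕ] (hG : IsStrictMonoGraph G) (hp : p ∈ G) {k : ℕ}
    (hk : k ≠ 0) (hpδ : p.1 = k • δ) : RealizesCut G δ (DivisibleBy.div p.2 k) := by
  intro q hq n hn
  calc sign (n • δ - q.1) = sign (k • (n • δ - q.1)) := (sign_nsmul hk _).symm
    _ = sign (n • p - k • q).1 := by simp [hpδ, smul_sub, smul_comm n k]
    _ = sign (n • p - k • q).2 := hG _ (sub_mem (nsmul_mem hp n) (nsmul_mem hq k))
    _ = sign (k • (n • DivisibleBy.div p.2 k - q.2)) := by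
      rw [smul_sub, smul_comm k n, DivisibleBy.div_cancel _ hk]; rfl
    _ = sign (n • DivisibleBy.div p.2 k - q.2) := sign_nsmul hk _

section Cut

variable [DivisibleBy Γ ℕ]

def lowerCut (G : AddSubgroup (Δ × Γ)) (δ : Δ) : Set Γ :=
  ⋃ n : ℕ+, (fun p : Δ × Γ => DivisibleBy.div p.2 (n : ℕ)) '' {p | p ∈ G ∧ p.1 < (n : ℕ) • δ}

def upperCut (G : AddSubgroup (Δ × Γ)) (δ : Δ) : Set Γ :=
  ⋃ n : ℕ+, (fun p : Δ × Γ => DivisibleBy.div p.2 (n : ℕ)) '' {p | p ∈ G ∧ (n : ℕ) • δ < p.1}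

theorem isCountablyCofinal_lowerCut (hΔ : IsShortCof Δ) (hG : IsStrictMonoGraph G) :
    IsCountablyCofinal (lowerCut G δ) :=
  IsCountablyCofinal.iUnion fun _ => (hΔ.isCountablyCofinal _).image fun _ hp _ hq h =>
    DivisibleBy.div_mono _ (hG.snd_le_snd hp.1 hq.1 h)

theorem isCountablyCofinal_upperCut (hΔ : IsShortCof Δ) (hG : IsStrictMonoGraph G) :
    IsCountablyCofinal (α := Γᵒᵈ) (upperCut (Γ := Γ) G δ) :=
  IsCountablyCofinal.iUnion fun _ =>
    (hΔ.isCountablyCofinal_dual _).image (α := Δᵒᵈ)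
      (v := fun p : Δ × Γ => OrderDual.toDual (DivisibleBy.div p.2 _)) fun _ hp _ hq h =>
      OrderDual.toDual_le_toDual.2 (DivisibleBy.div_mono _ (hG.snd_le_snd hq.1 hp.1 h))

theorem lowerCut_lt_upperCut (hG : IsStrictMonoGraph G) :
    ∀ a ∈ lowerCut G δ, ∀ b ∈ upperCut G δ, a < b := by
  simp only [lowerCut, upperCut, Set.mem_iUnion, Set.mem_image]
  rintro _ ⟨n, p, ⟨hp, hpδ⟩, rfl⟩ _ ⟨m, q, ⟨hq, hqδ⟩, rfl⟩
  have hnm : (n * m : ℕ) ≠ 0 := by positivity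
  have hmn : (m : ℕ) • p.2 < (n : ℕ) • q.2 :=
    hG.snd_lt_snd (nsmul_mem hp m) (nsmul_mem hq n) <| calc
      (m : ℕ) • p.1 < (m : ℕ) • (n : ℕ) • δ := nsmul_lt_nsmul_right m.ne_zero hpδ
      _ = (n : ℕ) • (m : ℕ) • δ := smul_comm _ _ _
      _ < (n : ℕ) • q.1 := nsmul_lt_nsmul_right n.ne_zero hqδ
  refine lt_of_nsmul_lt_nsmul_right (n * m : ℕ) ?_
  rwa [mul_nsmul, DivisibleBy.div_cancel _ n.ne_zero, mul_comm, mul_nsmul,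
    DivisibleBy.div_cancel _ m.ne_zero]

theorem exists_realizesCut_of_forall_ne_nsmul (hΔ : IsShortCof Δ) (hΓ : IsEtaOne Γ)
    (hG : IsStrictMonoGraph G) (hδ : ∀ p ∈ G, ∀ n : ℕ, n ≠ 0 → p.1 ≠ n • δ) :
    ∃ γ, RealizesCut G δ γ := by
  obtain ⟨γ, hlow, hup⟩ := hΓ.exists_between (isCountablyCofinal_lowerCut hΔ hG)
    (isCountablyCofinal_upperCut hΔ hG) (lowerCut_lt_upperCut hG)
  refine ⟨γ, fun p hp n hn => ?_⟩
  rcases lt_trichotomy p.1 (n • δ) with h | h | h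
  · have hlt := hlow _ (Set.mem_iUnion.2 ⟨⟨n, Nat.pos_of_ne_zero hn⟩, p, ⟨hp, h⟩, rfl⟩)
    have hpγ : p.2 < n • γ := DivisibleBy.div_cancel p.2 hn ▸ nsmul_lt_nsmul_right hn hlt
    rw [sign_pos (sub_pos.2 h), sign_pos (sub_pos.2 hpγ)]
  · exact absurd h (hδ p hp n hn)
  · have hlt := hup _ (Set.mem_iUnion.2 ⟨⟨n, Nat.pos_of_ne_zero hn⟩, p, ⟨hp, h⟩, rfl⟩)
    have hpγ : n • γ < p.2 := DivisibleBy.div_cancel p.2 hn ▸ nsmul_lt_nsmul_right hn hlt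
    rw [sign_neg (sub_neg.2 h), sign_neg (sub_neg.2 hpγ)]

end Cut

theorem exists_realizesCut [DivisibleBy Γ ℕ] (hΔ : IsShortCof Δ) (hΓ : IsEtaOne Γ)
    (hG : IsStrictMonoGraph G) (δ : Δ) : ∃ γ, RealizesCut G δ γ := by
  by_cases h : ∃ p ∈ G, ∃ n : ℕ, n ≠ 0 ∧ p.1 = n • δ
  · obtain ⟨p, hp, n, hn, hpδ⟩ := h
    exact ⟨_, realizesCut_div hG hp hn hpδ⟩
  · push Not at h
    exact exists_realizesCut_of_forall_ne_nsmul hΔ hΓ hG h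

theorem IsStrictMonoGraph.exists_le_forall_exists_mem [DivisibleBy Γ ℕ] (hΔ : IsShortCof Δ)
    (hΓ : IsEtaOne Γ) (hG : IsStrictMonoGraph G) :
    ∃ M, G ≤ M ∧ IsStrictMonoGraph M ∧ ∀ a, ∃ b, (a, b) ∈ M := by
  obtain ⟨M, hGM, hM, hmax⟩ := zorn_le_nonempty₀ {M | IsStrictMonoGraph M}
    (fun c hc hchain H hH => ⟨sSup c, isStrictMonoGraph_sSup ⟨H, hH⟩ hchain.directedOn hc,
      fun _ => le_sSup⟩) G hG
  refine ⟨M, hGM, hM, fun a => ?_⟩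
  obtain ⟨b, hb⟩ := exists_realizesCut hΔ hΓ hM a
  exact ⟨b, hmax (hM.sup_zmultiples hb) le_sup_left
    (AddSubgroup.mem_sup_right (AddSubgroup.mem_zmultiples _))⟩

end StrictMonoGraph

/-- Let `Δ` be a short ordered abelian group and `Γ` a divisible ordered abelian group
which is `η₁`. Then any ordered group embedding of a subgroup `Δ₀` of `Δ` into `Γ`
extends to an ordered group embedding of `Δ` into `Γ`. -/
theorem extend_ordered_group_embedding {Δ Γ : Type*} [AddCommGroup Δ] [LinearOrder Δ]
    [IsOrderedAddMonoid Δ] [AddCommGroup Γ] [LinearOrder Γ] [IsOrderedAddMonoid Γ] (hΔ : IsShortCof Δ)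
    (hdiv : ∀ n : ℕ, 0 < n → ∀ γ : Γ, ∃ δ : Γ, n • δ = γ) (hΓ : IsEtaOne Γ)
    (Δ₀ : AddSubgroup Δ) (f : Δ₀ →+ Γ) (hf : StrictMono f) :
    ∃ g : Δ →+ Γ, StrictMono g ∧ ∀ a : Δ₀, g a = f a := by
  let _ := divisibleByNatOfExists hdiv
  obtain ⟨M, hfM, hM, htot⟩ := (isStrictMonoGraph_range_prod hf).exists_le_forall_exists_mem hΔ hΓ
  obtain ⟨g, hg, hgM⟩ := hM.exists_addMonoidHom htot
  exact ⟨g, hg, fun a => hgM _ (hfM ⟨a, rfl⟩)⟩
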